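/- Let ν be an isotropic measure on S^{n-1} and t : S^{n-1} → (0,∞) continuous. Then det ∫_{S^{n-1}} t(v) v⊗v dν(v) ≥ exp(∫_{S^{n-1}} log t(v) dν(v)), with equality if and only if t(v_1)⋯t(v_n) is constant over all linearly independent n-tuples v_1,...,v_n ∈ supp(ν). -/

import Mathlib

/-!
Expanding `det(u)²`, for `u` the matrix with rows `u₁, …, uₙ`, as a double sum over permutations
and integrating with Fubini gives an integral Cauchy–Binet formula:
`∫ ∏ᵢ t(uᵢ) det(u)² dνⁿ(u) = n! · det ∫ t(v) v⊗v dν(v)`, and more generally `n!` times a mixed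
discriminant of the matrices `∫ gᵢ(v) v⊗v dν(v)`. For isotropic `ν` the case `t = 1` shows that
`ρ(u) = det(u)²/n!` is a probability density on `(S^{n-1})ⁿ`, and the mixed-discriminant form shows
that `∫ ρ(u) ∑ᵢ log t(uᵢ) = ∫ log t dν`. Since `det M = ∫ ρ(u) exp(∑ᵢ log t(uᵢ))`, the inequality
is Jensen's inequality for `exp`. Equality holds iff `∑ᵢ log t(uᵢ)` is constant `ρ`-a.e.; by
continuity this means constant on the tuples from the support of `νⁿ` where `ρ ≠ 0`, i.e. on the
linearly independent tuples from `supp ν`.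
-/

open MeasureTheory

/-- The support of a measure on `ℝ^n`. -/
def msupp {n : ℕ} (ν : Measure (EuclideanSpace ℝ (Fin n))) :
    Set (EuclideanSpace ℝ (Fin n)) :=
  {x | ∀ r > (0 : ℝ), ν (Metric.ball x r) ≠ 0}

open Equiv Filter Topology

theorem Equiv.Perm.eq_of_eqOn_compl_singleton {ι : Type*} {σ τ : Perm ι} (k : ι)
    (h : Set.EqOn σ τ {k}ᶜ) : σ = τ := by
  have hk : σ k = τ k := by
    by_cases hj : τ.symm (σ k) = k
    · rw [← hj, τ.apply_symm_apply, hj]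
    · exact absurd (σ.injective ((h hj).trans (τ.apply_symm_apply _))) hj
  ext j
  rcases eq_or_ne j k with rfl | hj
  · rw [hk]
  · rw [h hj]

theorem Equiv.Perm.intCast_sign_mul_self {ι R : Type*} [Fintype ι] [DecidableEq ι] [Ring R]
    (σ : Perm ι) : ((Perm.sign σ : ℤ) : R) * (Perm.sign σ : ℤ) = 1 := by
  rw [← Int.cast_mul, ← Units.val_mul, Int.units_mul_self, Units.val_one, Int.cast_one]

section MixedDiscriminant

variable {ι 𝕜 : Type*} [Fintype ι] [DecidableEq ι] [Field 𝕜]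

def mixedDiscriminant (A : ι → Matrix ι ι 𝕜) : 𝕜 :=
  ((Fintype.card ι).factorial : 𝕜)⁻¹ *
    ∑ σ : Perm ι, ∑ τ : Perm ι, ((Perm.sign σ : ℤ) : 𝕜) * (Perm.sign τ : ℤ) *
      ∏ i, A i (σ i) (τ i)

variable [CharZero 𝕜]

theorem mixedDiscriminant_const (A : Matrix ι ι 𝕜) :
    mixedDiscriminant (fun _ => A) = A.det := by
  have hrow (σ : Perm ι) : ∑ τ : Perm ι, ((Perm.sign τ : ℤ) : 𝕜) * ∏ i, A (σ i) (τ i) =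
      (Perm.sign σ : ℤ) * A.det := by
    rw [← Matrix.det_permute, ← Matrix.det_transpose, Matrix.det_apply']
    rfl
  simp_rw [mixedDiscriminant, mul_assoc, ← Finset.mul_sum, hrow, ← mul_assoc,
    Perm.intCast_sign_mul_self, one_mul, Finset.sum_const, Finset.card_univ, Fintype.card_perm,
    nsmul_eq_mul]
  exact inv_mul_cancel_left₀ (Nat.cast_ne_zero.2 (Nat.factorial_ne_zero _)) _

theorem sum_mixedDiscriminant_update_one (B : Matrix ι ι 𝕜) :
    ∑ k, mixedDiscriminant (Function.update (fun _ => 1) k B) = B.trace := by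
  -- Only `τ = σ` survives: the identity factors force `τ` to agree with `σ` off `k`.
  have hdiag (k : ι) (σ : Perm ι) :
      ∑ τ : Perm ι, ((Perm.sign σ : ℤ) : 𝕜) * (Perm.sign τ : ℤ) *
        ∏ i, Function.update (fun _ => (1 : Matrix ι ι 𝕜)) k B i (σ i) (τ i) =
        B (σ k) (σ k) := by
    rw [Finset.sum_eq_single σ]
    · rw [Perm.intCast_sign_mul_self, one_mul, Finset.prod_eq_single k]
      · simp
      · intro j _ hj
        simp [Function.update_of_ne hj]
      · simp
    · intro τ _ hτ
      obtain ⟨j, hjk, hj⟩ : ∃ j, j ≠ k ∧ σ j ≠ τ j := by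
        by_contra! h
        exact hτ (Perm.eq_of_eqOn_compl_singleton k fun j hj => h j hj).symm
      rw [Finset.prod_eq_zero (Finset.mem_univ j) (by simp [Function.update_of_ne hjk, hj]),
        mul_zero]
    · simp
  have hperm (σ : Perm ι) : ∑ k, B (σ k) (σ k) = B.trace := Equiv.sum_comp σ fun a => B a a
  simp_rw [mixedDiscriminant, hdiag, ← Finset.mul_sum]
  rw [Finset.sum_comm]
  simp_rw [hperm, Finset.sum_const, Finset.card_univ, Fintype.card_perm, nsmul_eq_mul]
  exact inv_mul_cancel_left₀ (Nat.cast_ne_zero.2 (Nat.factorial_ne_zero _)) _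

end MixedDiscriminant

section RowDet

variable {ι : Type*} [Fintype ι] [DecidableEq ι]

def rowDet (u : ι → EuclideanSpace ℝ ι) : ℝ := (Matrix.of fun i j => u i j).det

theorem continuous_rowDet : Continuous (rowDet (ι := ι)) :=
  Continuous.matrix_det <| continuous_matrix fun i j =>
    (EuclideanSpace.proj j).continuous.comp (continuous_apply i)

theorem rowDet_ne_zero_iff (u : ι → EuclideanSpace ℝ ι) :
    rowDet u ≠ 0 ↔ LinearIndependent ℝ u := by
  rw [rowDet, ← isUnit_iff_ne_zero, ← Matrix.isUnit_iff_isUnit_det,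
    ← Matrix.linearIndependent_rows_iff_isUnit]
  exact (WithLp.linearEquiv 2 ℝ (ι → ℝ)).toLinearMap.linearIndependent_iff_of_injOn (v := u)
    (WithLp.linearEquiv 2 ℝ (ι → ℝ)).injective.injOn

theorem rowDet_sq (u : ι → EuclideanSpace ℝ ι) :
    rowDet u ^ 2 = ∑ σ : Perm ι, ∑ τ : Perm ι, ((Perm.sign σ : ℤ) : ℝ) * (Perm.sign τ : ℤ) *
      ∏ i, u i (σ i) * u i (τ i) := by
  have h : rowDet u = ∑ σ : Perm ι, ((Perm.sign σ : ℤ) : ℝ) * ∏ i, u i (σ i) := by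
    rw [rowDet, ← Matrix.det_transpose, Matrix.det_apply']
    rfl
  simp_rw [h, sq, Finset.sum_mul_sum, Finset.prod_mul_distrib]
  exact Finset.sum_congr rfl fun σ _ => Finset.sum_congr rfl fun τ _ => by ring

end RowDet

section MomentMatrix

variable {ι : Type*} [Fintype ι]

noncomputable def momentMatrix (ν : Measure (EuclideanSpace ℝ ι))
    (g : EuclideanSpace ℝ ι → ℝ) : Matrix ι ι ℝ :=
  Matrix.of fun a b => ∫ v, g v * (v a * v b) ∂ν

theorem integral_prod_mul_rowDet_sq [DecidableEq ι] (ν : Measure (EuclideanSpace ℝ ι))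
    [SigmaFinite ν] (g : ι → EuclideanSpace ℝ ι → ℝ)
    (hg : ∀ i a b, Integrable (fun v => g i v * (v a * v b)) ν) :
    ∫ u, (∏ i, g i (u i)) * rowDet u ^ 2 ∂(Measure.pi fun _ => ν) =
      (Fintype.card ι).factorial * mixedDiscriminant fun i => momentMatrix ν (g i) := by
  have hint (σ τ : Perm ι) : Integrable (fun u : ι → EuclideanSpace ℝ ι =>
      ∏ i, g i (u i) * (u i (σ i) * u i (τ i))) (Measure.pi fun _ => ν) :=
    Integrable.fintype_prod fun i => hg i (σ i) (τ i)
  have hexpand (u : ι → EuclideanSpace ℝ ι) : (∏ i, g i (u i)) * rowDet u ^ 2 =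
      ∑ σ : Perm ι, ∑ τ : Perm ι, ((Perm.sign σ : ℤ) : ℝ) * (Perm.sign τ : ℤ) *
        ∏ i, g i (u i) * (u i (σ i) * u i (τ i)) := by
    simp_rw [rowDet_sq, Finset.mul_sum, Finset.prod_mul_distrib]
    exact Finset.sum_congr rfl fun σ _ => Finset.sum_congr rfl fun τ _ => by ring
  simp_rw [hexpand]
  rw [integral_finsetSum _ fun σ _ => integrable_finsetSum _ fun τ _ => (hint σ τ).const_mul _]
  rw [mixedDiscriminant, mul_inv_cancel_left₀ (Nat.cast_ne_zero.2 (Nat.factorial_ne_zero _))]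
  refine Finset.sum_congr rfl fun σ _ => ?_
  rw [integral_finsetSum _ fun τ _ => (hint σ τ).const_mul _]
  refine Finset.sum_congr rfl fun τ _ => ?_
  rw [integral_const_mul, integral_fintype_prod_eq_prod (fun i v => g i v * (v (σ i) * v (τ i)))]
  rfl

end MomentMatrix

section Isotropic

variable {E : Type*} [NormedAddCommGroup E] [InnerProductSpace ℝ E] [MeasurableSpace E]
  {ν : Measure E}

theorem integral_inner_mul_inner_of_isotropic
    (hiso : ∀ x : E, ∫ v, (inner ℝ x v : ℝ) ^ 2 ∂ν = ‖x‖ ^ 2) (x y : E) :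
    ∫ v, inner ℝ x v * inner ℝ y v ∂ν = inner ℝ x y := by
  -- `∫ ⟪z, v⟫² = ‖z‖² ≠ 0` rules out the junk value of a non-integrable integrand.
  have hint (z : E) : Integrable (fun v => (inner ℝ z v : ℝ) ^ 2) ν := by
    rcases eq_or_ne z 0 with rfl | hz
    · simp
    · exact Integrable.of_integral_ne_zero (by rw [hiso]; positivity)
  have hpolar (v : E) : inner ℝ x v * inner ℝ y v =
      ((inner ℝ (x + y) v : ℝ) ^ 2 - (inner ℝ x v : ℝ) ^ 2 - (inner ℝ y v : ℝ) ^ 2) / 2 := by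
    rw [inner_add_left]; ring
  simp_rw [hpolar]
  rw [integral_div, integral_sub, integral_sub (hint _) (hint _), hiso, hiso, hiso,
    norm_add_sq_real]
  · ring
  · exact (hint _).sub (hint _)
  · exact hint _

theorem momentMatrix_one_of_isotropic {ι : Type*} [Fintype ι] [DecidableEq ι]
    {ν : Measure (EuclideanSpace ℝ ι)}
    (hiso : ∀ x : EuclideanSpace ℝ ι, ∫ v, (inner ℝ x v : ℝ) ^ 2 ∂ν = ‖x‖ ^ 2) :
    momentMatrix ν 1 = 1 := by
  ext a b
  simpa [momentMatrix, EuclideanSpace.inner_single_left, Matrix.one_apply, eq_comm] using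
    integral_inner_mul_inner_of_isotropic hiso (EuclideanSpace.single a 1)
      (EuclideanSpace.single b 1)

end Isotropic

theorem Continuous.integrable_of_ae_mem_isCompact {X : Type*} [TopologicalSpace X]
    [MeasurableSpace X] [OpensMeasurableSpace X] {μ : Measure X} [IsFiniteMeasure μ]
    {K : Set X} (hK : IsCompact K) (hμK : ∀ᵐ x ∂μ, x ∈ K) {f : X → ℝ} (hf : Continuous f) :
    Integrable f μ := by
  obtain ⟨C, hC⟩ := hK.exists_bound_of_continuousOn hf.continuousOn
  exact Integrable.of_bound hf.aestronglyMeasurable C (hμK.mono hC)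

section Sphere

variable {ι : Type*} [Fintype ι] {ν : Measure (EuclideanSpace ℝ ι)} [IsFiniteMeasure ν]

theorem Continuous.integrable_of_ae_mem_sphere (hsph : ∀ᵐ v ∂ν, v ∈ Metric.sphere 0 1)
    {f : EuclideanSpace ℝ ι → ℝ} (hf : Continuous f) : Integrable f ν :=
  hf.integrable_of_ae_mem_isCompact (isCompact_sphere 0 1) hsph

theorem Continuous.integrable_pi_of_ae_mem_sphere (hsph : ∀ᵐ v ∂ν, v ∈ Metric.sphere 0 1)
    {F : (ι → EuclideanSpace ℝ ι) → ℝ} (hF : Continuous F) :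
    Integrable F (Measure.pi fun _ => ν) := by
  have hae : ∀ᵐ u ∂(Measure.pi fun _ : ι => ν), ∀ i, u i ∈ Metric.sphere 0 1 :=
    ae_all_iff.2 fun i => Measure.tendsto_eval_ae_ae hsph
  exact hF.integrable_of_ae_mem_isCompact (isCompact_univ_pi fun _ => isCompact_sphere 0 1)
    (hae.mono fun u hu => Set.mem_univ_pi.2 hu)

theorem Continuous.integrable_mul_apply_mul_apply (hsph : ∀ᵐ v ∂ν, v ∈ Metric.sphere 0 1)
    {f : EuclideanSpace ℝ ι → ℝ} (hf : Continuous f) (a b : ι) :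
    Integrable (fun v => f v * (v a * v b)) ν :=
  (hf.mul ((EuclideanSpace.proj a).continuous.mul (EuclideanSpace.proj b).continuous)
    ).integrable_of_ae_mem_sphere hsph

theorem trace_momentMatrix_of_ae_mem_sphere (hsph : ∀ᵐ v ∂ν, v ∈ Metric.sphere 0 1)
    {f : EuclideanSpace ℝ ι → ℝ} (hf : Continuous f) :
    (momentMatrix ν f).trace = ∫ v, f v ∂ν := by
  simp only [Matrix.trace, Matrix.diag, momentMatrix, Matrix.of_apply]
  rw [← integral_finsetSum _ fun a _ => hf.integrable_mul_apply_mul_apply hsph a a]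
  refine integral_congr_ae <| hsph.mono fun v hv => ?_
  have hnorm : ∑ a, v a * v a = 1 := by
    have hv1 : ‖v‖ = 1 := by simpa using hv
    simp_rw [← sq, ← EuclideanSpace.real_norm_sq_eq, hv1, one_pow]
  simp only [← Finset.mul_sum, hnorm, mul_one]

end Sphere

section Density

variable {ι : Type*} [Fintype ι] [DecidableEq ι]

noncomputable def rowDetDensity (u : ι → EuclideanSpace ℝ ι) : ℝ :=
  ((Fintype.card ι).factorial : ℝ)⁻¹ * rowDet u ^ 2

theorem continuous_rowDetDensity : Continuous (rowDetDensity (ι := ι)) :=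
  continuous_const.mul (continuous_rowDet.pow 2)

theorem rowDetDensity_nonneg : 0 ≤ rowDetDensity (ι := ι) :=
  fun u => by unfold rowDetDensity; positivity

theorem rowDetDensity_ne_zero_iff (u : ι → EuclideanSpace ℝ ι) :
    rowDetDensity u ≠ 0 ↔ LinearIndependent ℝ u := by
  simp [rowDetDensity, Nat.factorial_ne_zero, ← rowDet_ne_zero_iff]

variable {ν : Measure (EuclideanSpace ℝ ι)} [IsFiniteMeasure ν]

theorem integral_rowDetDensity_mul_prod (hsph : ∀ᵐ v ∂ν, v ∈ Metric.sphere 0 1)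
    {f : EuclideanSpace ℝ ι → ℝ} (hf : Continuous f) :
    ∫ u, rowDetDensity u * ∏ i, f (u i) ∂(Measure.pi fun _ => ν) = (momentMatrix ν f).det := by
  simp_rw [rowDetDensity, mul_assoc, mul_comm (rowDet _ ^ 2)]
  rw [integral_const_mul, integral_prod_mul_rowDet_sq ν (fun _ => f)
    (fun _ => hf.integrable_mul_apply_mul_apply hsph), mixedDiscriminant_const,
    inv_mul_cancel_left₀ (Nat.cast_ne_zero.2 (Nat.factorial_ne_zero _))]

theorem integral_rowDetDensity (hsph : ∀ᵐ v ∂ν, v ∈ Metric.sphere 0 1)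
    (hiso : ∀ x : EuclideanSpace ℝ ι, ∫ v, (inner ℝ x v : ℝ) ^ 2 ∂ν = ‖x‖ ^ 2) :
    ∫ u, rowDetDensity u ∂(Measure.pi fun _ => ν) = 1 := by
  simpa [momentMatrix_one_of_isotropic hiso] using
    integral_rowDetDensity_mul_prod hsph (f := 1) continuous_const

theorem integral_rowDetDensity_mul_sum (hsph : ∀ᵐ v ∂ν, v ∈ Metric.sphere 0 1)
    (hiso : ∀ x : EuclideanSpace ℝ ι, ∫ v, (inner ℝ x v : ℝ) ^ 2 ∂ν = ‖x‖ ^ 2)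
    {f : EuclideanSpace ℝ ι → ℝ} (hf : Continuous f) :
    ∫ u, rowDetDensity u * ∑ k, f (u k) ∂(Measure.pi fun _ => ν) = ∫ v, f v ∂ν := by
  have hk (k : ι) : ∫ u, f (u k) * rowDet u ^ 2 ∂(Measure.pi fun _ => ν) =
      (Fintype.card ι).factorial *
        mixedDiscriminant (Function.update (fun _ => 1) k (momentMatrix ν f)) := by
    have hg : ∀ i, Continuous (Function.update (fun _ => (1 : EuclideanSpace ℝ ι → ℝ)) k f i) :=
      (Function.forall_update_iff (fun _ => 1) (a := k) (b := f) fun _ g => Continuous g).2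
        ⟨hf, fun _ _ => continuous_const⟩
    have hprod (u : ι → EuclideanSpace ℝ ι) :
        ∏ i, Function.update (fun _ => (1 : EuclideanSpace ℝ ι → ℝ)) k f i (u i) = f (u k) := by
      rw [Finset.prod_eq_single k (fun i _ hi => by simp [Function.update_of_ne hi]) (by simp)]
      simp
    have := integral_prod_mul_rowDet_sq ν _ fun i => (hg i).integrable_mul_apply_mul_apply hsph
    simp_rw [hprod, Function.apply_update (fun _ => momentMatrix ν),
      momentMatrix_one_of_isotropic hiso] at this
    exact this
  have hint (k : ι) : Integrable (fun u : ι → EuclideanSpace ℝ ι => f (u k) * rowDet u ^ 2)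
      (Measure.pi fun _ => ν) :=
    ((hf.comp (continuous_apply k)).mul (continuous_rowDet.pow 2)
      ).integrable_pi_of_ae_mem_sphere hsph
  simp_rw [rowDetDensity, mul_assoc, mul_comm (rowDet _ ^ 2), Finset.sum_mul]
  rw [integral_const_mul, integral_finsetSum _ fun k _ => hint k]
  simp_rw [hk, ← Finset.mul_sum, sum_mixedDiscriminant_update_one,
    trace_momentMatrix_of_ae_mem_sphere hsph hf]
  exact inv_mul_cancel_left₀ (Nat.cast_ne_zero.2 (Nat.factorial_ne_zero _)) _

end Density

section WeightedJensen

variable {X : Type*} [MeasurableSpace X] {m : Measure X} {ρ F : X → ℝ}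

theorem integral_withDensity_ofReal (hρm : Measurable ρ) (hρ : 0 ≤ ρ) (G : X → ℝ) :
    ∫ x, G x ∂m.withDensity (fun x => ENNReal.ofReal (ρ x)) = ∫ x, ρ x * G x ∂m := by
  rw [integral_withDensity_eq_integral_toReal_smul hρm.ennreal_ofReal
    (ae_of_all _ fun _ => ENNReal.ofReal_lt_top)]
  simp_rw [ENNReal.toReal_ofReal (hρ _), smul_eq_mul]

theorem integrable_withDensity_ofReal_iff (hρm : Measurable ρ) (hρ : 0 ≤ ρ) {G : X → ℝ} :
    Integrable G (m.withDensity fun x => ENNReal.ofReal (ρ x)) ↔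
      Integrable (fun x => ρ x * G x) m := by
  rw [integrable_withDensity_iff_integrable_smul' hρm.ennreal_ofReal
    (ae_of_all _ fun _ => ENNReal.ofReal_lt_top)]
  simp_rw [ENNReal.toReal_ofReal (hρ _), smul_eq_mul]

theorem isProbabilityMeasure_withDensity_ofReal (hρ : 0 ≤ ρ) (hρ1 : ∫ x, ρ x ∂m = 1) :
    IsProbabilityMeasure (m.withDensity fun x => ENNReal.ofReal (ρ x)) := by
  constructor
  rw [withDensity_apply _ MeasurableSet.univ, Measure.restrict_univ,
    ← ofReal_integral_eq_lintegral_ofReal (Integrable.of_integral_ne_zero (by simp [hρ1]))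
      (ae_of_all _ hρ), hρ1, ENNReal.ofReal_one]

theorem exp_integral_mul_le_integral_mul_exp (hρm : Measurable ρ) (hρ : 0 ≤ ρ)
    (hρ1 : ∫ x, ρ x ∂m = 1) (hF : Integrable (fun x => ρ x * F x) m)
    (hexpF : Integrable (fun x => ρ x * Real.exp (F x)) m) :
    Real.exp (∫ x, ρ x * F x ∂m) ≤ ∫ x, ρ x * Real.exp (F x) ∂m := by
  have := isProbabilityMeasure_withDensity_ofReal hρ hρ1
  rw [← integral_withDensity_ofReal hρm hρ, ← integral_withDensity_ofReal hρm hρ]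
  exact convexOn_exp.map_integral_le Real.continuous_exp.continuousOn isClosed_univ
    (ae_of_all _ fun _ => Set.mem_univ _) ((integrable_withDensity_ofReal_iff hρm hρ).2 hF)
    ((integrable_withDensity_ofReal_iff hρm hρ).2 hexpF)

theorem integral_mul_exp_eq_exp_integral_mul_iff (hρm : Measurable ρ) (hρ : 0 ≤ ρ)
    (hρ1 : ∫ x, ρ x ∂m = 1) (hF : Integrable (fun x => ρ x * F x) m)
    (hexpF : Integrable (fun x => ρ x * Real.exp (F x)) m) :
    ∫ x, ρ x * Real.exp (F x) ∂m = Real.exp (∫ x, ρ x * F x ∂m) ↔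
      ∃ c, ∀ᵐ x ∂m, ρ x ≠ 0 → F x = c := by
  have := isProbabilityMeasure_withDensity_ofReal hρ hρ1
  have hdens (x : X) : ENNReal.ofReal (ρ x) ≠ 0 ↔ ρ x ≠ 0 := by
    rw [ne_eq, ENNReal.ofReal_eq_zero, not_le]
    exact (hρ x).lt_iff_ne'
  constructor
  · intro heq
    rw [← integral_withDensity_ofReal hρm hρ, ← integral_withDensity_ofReal hρm hρ] at heq
    obtain hconst | hlt := strictConvexOn_exp.ae_eq_const_or_map_average_lt
      Real.continuous_exp.continuousOn isClosed_univ (ae_of_all _ fun _ => Set.mem_univ _)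
      ((integrable_withDensity_ofReal_iff hρm hρ).2 hF)
      ((integrable_withDensity_ofReal_iff hρm hρ).2 hexpF)
    · rw [EventuallyEq, ae_withDensity_iff hρm.ennreal_ofReal] at hconst
      exact ⟨_, hconst.mono fun x hx hρx => hx ((hdens x).2 hρx)⟩
    · simp only [average_eq_integral] at hlt
      exact absurd heq hlt.ne'
  · rintro ⟨c, hc⟩
    have hρF : ∀ᵐ x ∂m, ρ x * F x = ρ x * c := hc.mono fun x hx => by
      by_cases h : ρ x = 0 <;> simp [h, hx]
    have hρexpF : ∀ᵐ x ∂m, ρ x * Real.exp (F x) = ρ x * Real.exp c := hc.mono fun x hx => by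
      by_cases h : ρ x = 0 <;> simp [h, hx]
    rw [integral_congr_ae hρF, integral_congr_ae hρexpF, integral_mul_const, integral_mul_const,
      hρ1, one_mul, one_mul]

end WeightedJensen

section Support

theorem Measure.support_pi {ι : Type*} [Fintype ι] {X : ι → Type*}
    [∀ i, TopologicalSpace (X i)] [∀ i, MeasurableSpace (X i)] (μ : ∀ i, Measure (X i))
    [∀ i, SigmaFinite (μ i)] :
    (Measure.pi μ).support = Set.univ.pi fun i => (μ i).support := by
  ext x
  simp only [Set.mem_univ_pi, Measure.mem_support_iff_forall]
  constructor
  · intro h i U hU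
    refine pos_iff_ne_zero.2 fun hU0 => ?_
    have := h _ ((continuous_apply i).continuousAt.preimage_mem_nhds hU)
    exact this.ne' (Measure.pi_eval_preimage_null μ hU0)
  · intro h U hU
    rw [nhds_pi, Filter.mem_pi'] at hU
    obtain ⟨I, t, ht, htU⟩ := hU
    calc 0 < ∏ i, μ i (t i) := pos_iff_ne_zero.2 <|
          Finset.prod_ne_zero_iff.2 fun i _ => (h i (t i) (ht i)).ne'
      _ = Measure.pi μ (Set.univ.pi t) := (Measure.pi_pi μ t).symm
      _ ≤ Measure.pi μ U := measure_mono fun y hy => htU fun i _ => hy i (Set.mem_univ i)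

theorem msupp_eq_support {n : ℕ} (ν : Measure (EuclideanSpace ℝ (Fin n))) :
    msupp ν = ν.support := by
  ext x
  simp [msupp, Metric.nhds_basis_ball.mem_measureSupport, pos_iff_ne_zero]

theorem Continuous.exists_ae_eq_const_on_iff {X Y : Type*} [TopologicalSpace X]
    [HereditarilyLindelofSpace X] [MeasurableSpace X] [TopologicalSpace Y] [T1Space Y]
    [Nonempty Y] {m : Measure X} {U : Set X} (hU : IsOpen U) {F : X → Y} (hF : Continuous F) :
    (∃ c, ∀ᵐ x ∂m, x ∈ U → F x = c) ↔
      ∀ x ∈ m.support ∩ U, ∀ y ∈ m.support ∩ U, F x = F y := by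
  constructor
  · rintro ⟨c, hc⟩
    have hsupp (x : X) (hx : x ∈ m.support ∩ U) : F x = c := by
      by_contra hne
      have hopen : IsOpen (U ∩ F ⁻¹' {c}ᶜ) := hU.inter (isOpen_compl_singleton.preimage hF)
      refine ((Measure.mem_support_iff_forall x).1 hx.1 _ (hopen.mem_nhds ⟨hx.2, hne⟩)).ne' ?_
      have hnull : m {x | ¬(x ∈ U → F x = c)} = 0 := ae_iff.1 hc
      exact measure_mono_null (fun y hy (h : y ∈ U → F y = c) => hy.2 (h hy.1)) hnull
    exact fun x hx y hy => (hsupp x hx).trans (hsupp y hy).symm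
  · intro h
    have hae : ∀ᵐ x ∂m, x ∈ m.support := Measure.support_mem_ae
    by_cases hne : (m.support ∩ U).Nonempty
    · obtain ⟨x₀, hx₀⟩ := hne
      exact ⟨F x₀, hae.mono fun x hx hxU => h x ⟨hx, hxU⟩ x₀ hx₀⟩
    · rw [Set.not_nonempty_iff_eq_empty] at hne
      exact ⟨Classical.arbitrary Y, hae.mono fun x hx hxU => (hne.subset ⟨hx, hxU⟩).elim⟩

theorem Continuous.exists_ae_rowDetDensity_ne_zero_imp_eq_iff {ι : Type*} [Fintype ι]
    [DecidableEq ι] {ν : Measure (EuclideanSpace ℝ ι)} [SigmaFinite ν]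
    {F : (ι → EuclideanSpace ℝ ι) → ℝ} (hF : Continuous F) :
    (∃ c, ∀ᵐ u ∂(Measure.pi fun _ => ν), rowDetDensity u ≠ 0 → F u = c) ↔
      ∀ v w : ι → EuclideanSpace ℝ ι, (∀ i, v i ∈ ν.support) → (∀ i, w i ∈ ν.support) →
        LinearIndependent ℝ v → LinearIndependent ℝ w → F v = F w := by
  have hU : IsOpen {u : ι → EuclideanSpace ℝ ι | LinearIndependent ℝ u} := by
    simpa only [← rowDet_ne_zero_iff] using isOpen_ne_fun continuous_rowDet continuous_const
  simp_rw [rowDetDensity_ne_zero_iff]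
  refine (hF.exists_ae_eq_const_on_iff hU).trans ?_
  simp only [Measure.support_pi, Set.mem_inter_iff, Set.mem_univ_pi, Set.mem_ofPred_eq]
  exact ⟨fun h v w hv hw hlv hlw => h v ⟨hv, hlv⟩ w ⟨hw, hlw⟩,
    fun h v hv w hw => h v w hv.1 hw.1 hv.2 hw.2⟩

end Support

/-- Ball–Barthe lemma: For an isotropic measure `ν` on `S^{n-1}` and a
continuous `t : S^{n-1} → (0,∞)`,
`det ∫ t(v) v⊗v dν(v) ≥ exp ∫ log t(v) dν(v)`, with equality iff
`t(v₁)⋯t(vₙ)` is constant over linearly independent `v₁,…,vₙ ∈ supp ν`. -/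
theorem ball_barthe (n : ℕ)
    (ν : Measure (EuclideanSpace ℝ (Fin n))) [IsFiniteMeasure ν]
    (hsph : ν (Metric.sphere (0 : EuclideanSpace ℝ (Fin n)) 1)ᶜ = 0)
    (hiso : ∀ x : EuclideanSpace ℝ (Fin n),
      ∫ v, (inner ℝ x v : ℝ) ^ 2 ∂ν = ‖x‖ ^ 2)
    (t : EuclideanSpace ℝ (Fin n) → ℝ) (htc : Continuous t) (htpos : ∀ v, 0 < t v)
    (M : Matrix (Fin n) (Fin n) ℝ)
    (hM : ∀ i j, M i j = ∫ v, t v * (v i * v j) ∂ν) :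
    Real.exp (∫ v, Real.log (t v) ∂ν) ≤ M.det ∧
      (M.det = Real.exp (∫ v, Real.log (t v) ∂ν) ↔
        ∀ v w : Fin n → EuclideanSpace ℝ (Fin n),
          (∀ i, v i ∈ msupp ν) → (∀ i, w i ∈ msupp ν) →
          LinearIndependent ℝ v → LinearIndependent ℝ w →
          ∏ i, t (v i) = ∏ i, t (w i)) := by
  have hsph' := mem_ae_iff.2 hsph
  set F : (Fin n → EuclideanSpace ℝ (Fin n)) → ℝ := fun u => ∑ i, Real.log (t (u i))
  have hexpF (u : Fin n → EuclideanSpace ℝ (Fin n)) : Real.exp (F u) = ∏ i, t (u i) := by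
    simp only [F, Real.exp_sum, Real.exp_log (htpos _)]
  have hlogt : Continuous fun v => Real.log (t v) := htc.log fun v => (htpos v).ne'
  have hFc : Continuous F := continuous_finsetSum _ fun i _ => hlogt.comp (continuous_apply i)
  have hdet : ∫ u, rowDetDensity u * Real.exp (F u) ∂(Measure.pi fun _ => ν) = M.det := by
    simp_rw [hexpF, integral_rowDetDensity_mul_prod hsph' htc]
    exact congrArg Matrix.det (Matrix.ext fun i j => (hM i j).symm)
  have hlog := integral_rowDetDensity_mul_sum hsph' hiso hlogt
  have hρ1 := integral_rowDetDensity hsph' hiso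
  have hρF := (continuous_rowDetDensity.mul hFc).integrable_pi_of_ae_mem_sphere hsph'
  have hρexpF := (continuous_rowDetDensity.mul (Real.continuous_exp.comp hFc)
    ).integrable_pi_of_ae_mem_sphere hsph'
  refine ⟨hdet ▸ hlog ▸ exp_integral_mul_le_integral_mul_exp
    continuous_rowDetDensity.measurable rowDetDensity_nonneg hρ1 hρF hρexpF, ?_⟩
  rw [← hdet, ← hlog, integral_mul_exp_eq_exp_integral_mul_iff continuous_rowDetDensity.measurable
    rowDetDensity_nonneg hρ1 hρF hρexpF, hFc.exists_ae_rowDetDensity_ne_zero_imp_eq_iff]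
  have hFeq (u w : Fin n → EuclideanSpace ℝ (Fin n)) :
      F u = F w ↔ ∏ i, t (u i) = ∏ i, t (w i) := by
    rw [← Real.exp_eq_exp, hexpF, hexpF]
  simp_rw [msupp_eq_support, hFeq]
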